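/- arXiv:1901.08186 — 2 statements merged into one kernel-verified Lean document; each statement's English description precedes it below -/
import Mathlib

section
/- Let K be an invertible self-dual ℓ×ℓ matrix over F_2, fix i with 1 ≤ i ≤ ℓ, and let A'_j denote the number of vectors of Hamming weight j in the coset C_{ℓ-i} \ C_{ℓ+1-i}. Then for every w with 0 ≤ w ≤ ℓ, E_{i,w} ≥ binom(ℓ, w) − min( ∑_{j=0}^{ℓ-w} binom(ℓ-j, ℓ-w-j)·A'_j , binom(ℓ, ℓ-w) ). -/
/-- The support of a vector over `ZMod 2`. -/
def supp {ℓ : ℕ} (v : Fin ℓ → ZMod 2) : Set (Fin ℓ) := {j | v j ≠ 0}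

/-- The Hamming weight of a vector over `ZMod 2`. -/
def wt {ℓ : ℕ} (v : Fin ℓ → ZMod 2) : ℕ :=
  (Finset.univ.filter fun j => v j ≠ 0).card

/-- The kernel code `C_i`: the span of the rows `g_{i+1}, …, g_ℓ` of `K`
(rows of index `≥ i` in 0-based indexing). -/
def kernelCode {ℓ : ℕ} (K : Matrix (Fin ℓ) (Fin ℓ) (ZMod 2)) (i : ℕ) :
    Submodule (ZMod 2) (Fin ℓ → ZMod 2) :=
  Submodule.span (ZMod 2) {v | ∃ r : Fin ℓ, i ≤ (r : ℕ) ∧ v = K r}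

/-- `e` is an uncorrectable erasure pattern for the bit-channel of (0-based) index `i`. -/
def Uncorrectable {ℓ : ℕ} (K : Matrix (Fin ℓ) (Fin ℓ) (ZMod 2)) (i : Fin ℓ)
    (e : Fin ℓ → ZMod 2) : Prop :=
  ∃ u' u'' : Fin ℓ → ZMod 2,
    (∀ j, j < i → u' j = u'' j) ∧ u' i ≠ u'' i ∧
      ∀ j, e j = 0 → Matrix.vecMul u' K j = Matrix.vecMul u'' K j

/-- `E_{i,w}`: the number of uncorrectable erasure patterns of weight `w`
for bit-channel `i`. -/
noncomputable def Ecount {ℓ : ℕ} (K : Matrix (Fin ℓ) (Fin ℓ) (ZMod 2)) (i : Fin ℓ)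
    (w : ℕ) : ℕ :=
  Nat.card {e : Fin ℓ → ZMod 2 // Uncorrectable K i e ∧ wt e = w}

/-- `f_i(z) = ∑_{w=0}^{ℓ} E_{i,w} z^w (1-z)^{ℓ-w}`. -/
noncomputable def fpoly {ℓ : ℕ} (K : Matrix (Fin ℓ) (Fin ℓ) (ZMod 2)) (i : Fin ℓ)
    (z : ℝ) : ℝ :=
  ∑ w ∈ Finset.range (ℓ + 1), (Ecount K i w : ℝ) * z ^ w * (1 - z) ^ (ℓ - w)

/-- Dual code with respect to the standard bilinear form `⟨u,v⟩ = ∑ j, u j * v j`. -/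
def dualCode {ℓ : ℕ} (C : Submodule (ZMod 2) (Fin ℓ → ZMod 2)) :
    Submodule (ZMod 2) (Fin ℓ → ZMod 2) where
  carrier := {v | ∀ c ∈ C, ∑ j, v j * c j = 0}
  add_mem' := by
    intro a b ha hb c hc
    simpa [add_mul, Finset.sum_add_distrib] using by rw [ha c hc, hb c hc]; simp
  zero_mem' := by intro c hc; simp
  smul_mem' := by
    intro r a ha c hc
    simp only [Pi.smul_apply, smul_eq_mul, mul_assoc, ← Finset.mul_sum, Set.mem_setOf_eq]
    rw [ha c hc, mul_zero]

/-- `K` is self-dual if `C_i = C_{ℓ-i}^⊥` for all `0 ≤ i ≤ ℓ`. -/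
def SelfDual {ℓ : ℕ} (K : Matrix (Fin ℓ) (Fin ℓ) (ZMod 2)) : Prop :=
  ∀ i ≤ ℓ, kernelCode K i = dualCode (kernelCode K (ℓ - i))

/-!
If `e` is correctable for bit-channel `i`, then `g_{i+1}` restricted to the unerased positions
is not the restriction of a codeword of `C_{i+1}`. A linear functional separating it, read as a
vector `v`, vanishes on the erased positions, lies in `C_{i+1}^⊥ = C_{ℓ-i-1}` and is not orthogonal
to `g_{i+1}`, so `v ∉ C_i^⊥ = C_{ℓ-i}`. Hence the complement of a correctable pattern of weight `w`
has weight `ℓ - w` and covers a vector of the coset `C_{ℓ-i-1} \ C_{ℓ-i}`; a union bound over the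
coset counts at most `∑_j binom(ℓ-j, ℓ-w-j) A'_j` such complements, and there are trivially at
most `binom(ℓ, ℓ-w)` of them.
-/

open Finset Matrix

theorem exists_dotProduct_ne_zero_of_notMem {F ι : Type*} [Field F] [Fintype ι] [DecidableEq ι]
    {W : Submodule F (ι → F)} {x : ι → F} (hx : x ∉ W) :
    ∃ v : ι → F, (∀ y ∈ W, v ⬝ᵥ y = 0) ∧ v ⬝ᵥ x ≠ 0 := by
  obtain ⟨f, hfx, hfW⟩ := Submodule.exists_dual_map_eq_bot_of_notMem hx inferInstance
  have hf : ∀ y, f y = (fun j => f (Pi.single j 1)) ⬝ᵥ y := fun y => by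
    conv_lhs => rw [pi_eq_sum_univ y, map_sum]
    simp only [map_smul, smul_eq_mul, dotProduct, mul_comm]
    congr! with j k
    simp [Pi.single_apply, eq_comm]
  refine ⟨_, fun y hy => ?_, by rwa [← hf]⟩
  rw [← hf, ← Submodule.mem_bot F, ← hfW]
  exact Submodule.mem_map_of_mem hy

section KernelCode

variable {ℓ : ℕ} {K : Matrix (Fin ℓ) (Fin ℓ) (ZMod 2)}

theorem exists_vecMul_eq_of_mem_kernelCode {m : ℕ} {c : Fin ℓ → ZMod 2}
    (hc : c ∈ kernelCode K m) :
    ∃ a : Fin ℓ → ZMod 2, (∀ r : Fin ℓ, (r : ℕ) < m → a r = 0) ∧ a ᵥ* K = c := by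
  induction hc using Submodule.span_induction with
  | mem v hv =>
    obtain ⟨r, hr, rfl⟩ := hv
    refine ⟨Pi.single r 1, fun r' hr' => Pi.single_eq_of_ne (by rintro rfl; omega) 1, ?_⟩
    rw [single_one_vecMul]; rfl
  | zero => exact ⟨0, fun _ _ => rfl, zero_vecMul K⟩
  | add x y _ _ hx hy =>
    obtain ⟨a, ha, rfl⟩ := hx
    obtain ⟨b, hb, rfl⟩ := hy
    exact ⟨a + b, fun r hr => by simp [ha r hr, hb r hr], add_vecMul K a b⟩
  | smul s x _ hx =>
    obtain ⟨a, ha, rfl⟩ := hx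
    exact ⟨s • a, fun r hr => by simp [ha r hr], smul_vecMul s a K⟩

variable (K) in
theorem row_mem_kernelCode (i : Fin ℓ) : K i ∈ kernelCode K i :=
  Submodule.subset_span ⟨i, le_rfl, rfl⟩

theorem SelfDual.kernelCode_sub_eq_dualCode (hsd : SelfDual K) {m : ℕ} (hm : m ≤ ℓ) :
    kernelCode K (ℓ - m) = dualCode (kernelCode K m) := by
  simpa [Nat.sub_sub_self hm] using hsd (ℓ - m) (Nat.sub_le ℓ m)

theorem row_notMem_sup_of_not_uncorrectable {i : Fin ℓ} {e : Fin ℓ → ZMod 2}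
    (he : ¬ Uncorrectable K i e) :
    K i ∉ kernelCode K (i + 1) ⊔ Submodule.pi {j | e j = 0} fun _ => ⊥ := by
  rw [Submodule.mem_sup]
  rintro ⟨c, hc, z, hz, hcz⟩
  obtain ⟨a, ha, rfl⟩ := exists_vecMul_eq_of_mem_kernelCode hc
  refine he ⟨Pi.single i 1, a, fun j hj => ?_, ?_, fun j hj => ?_⟩
  · rw [Pi.single_eq_of_ne hj.ne 1, ha j (by omega)]
  · rw [Pi.single_eq_same, ha i (by omega)]; decide
  · have hzj : z j = 0 := (Submodule.mem_pi.mp hz) j hj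
    simpa [hzj] using (congrFun hcz j).symm

theorem exists_mem_coset_vanishing_of_not_uncorrectable (hsd : SelfDual K) {i : Fin ℓ}
    {e : Fin ℓ → ZMod 2} (he : ¬ Uncorrectable K i e) :
    ∃ c ∈ kernelCode K i.rev, c ∉ kernelCode K (ℓ - i) ∧ ∀ j, e j ≠ 0 → c j = 0 := by
  obtain ⟨v, hvW, hvi⟩ :=
    exists_dotProduct_ne_zero_of_notMem (row_notMem_sup_of_not_uncorrectable he)
  refine ⟨v, ?_, ?_, fun j hj => ?_⟩
  · rw [Fin.val_rev, hsd.kernelCode_sub_eq_dualCode (m := i + 1) i.isLt]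
    exact fun c hc => hvW c (Submodule.mem_sup_left hc)
  · rw [hsd.kernelCode_sub_eq_dualCode i.isLt.le]
    exact fun hv => hvi (hv _ (row_mem_kernelCode K i))
  · have hsingle : Pi.single j 1 ∈ Submodule.pi {k | e k = 0}
        fun _ => (⊥ : Submodule (ZMod 2) (ZMod 2)) :=
      Submodule.mem_pi.mpr fun k hk => Pi.single_eq_of_ne (by rintro rfl; exact hj hk) 1
    simpa using hvW _ (Submodule.mem_sup_right hsingle)

end KernelCode

theorem card_filter_card_eq_and_superset_le {α : Type*} [Fintype α] [DecidableEq α]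
    (t : Finset α) (m : ℕ) :
    #{s : Finset α | #s = m ∧ t ⊆ s} ≤ (Fintype.card α - #t).choose (m - #t) :=
  calc #{s : Finset α | #s = m ∧ t ⊆ s}
      ≤ #((powersetCard (m - #t) tᶜ).image (· ∪ t)) := by
        refine card_le_card fun s hs => mem_image.2 ⟨s \ t, ?_, sdiff_union_of_subset ?_⟩
        all_goals obtain ⟨hsm, hts⟩ := (mem_filter.1 hs).2
        · rw [mem_powersetCard, card_sdiff_of_subset hts, hsm]
          exact ⟨fun x hx => mem_compl.2 (mem_sdiff.1 hx).2, rfl⟩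
        · exact hts
    _ ≤ #(powersetCard (m - #t) tᶜ) := card_image_le
    _ = (Fintype.card α - #t).choose (m - #t) := by rw [card_powersetCard, card_compl]

theorem ZMod.eq_one_of_ne_zero_two {a : ZMod 2} (ha : a ≠ 0) : a = 1 := by
  revert a; decide

section Weight

variable {ℓ : ℕ}

def suppFinset (v : Fin ℓ → ZMod 2) : Finset (Fin ℓ) := {j | v j ≠ 0}

theorem wt_eq_card_suppFinset (v : Fin ℓ → ZMod 2) : wt v = #(suppFinset v) := rfl

def suppEquiv (ℓ : ℕ) : (Fin ℓ → ZMod 2) ≃ Finset (Fin ℓ) where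
  toFun := suppFinset
  invFun s j := if j ∈ s then 1 else 0
  left_inv v := funext fun j => by
    by_cases h : v j = 0
    · simp [suppFinset, h]
    · simp [suppFinset, ZMod.eq_one_of_ne_zero_two h]
  right_inv s := by ext j; by_cases h : j ∈ s <;> simp [suppFinset, h]

theorem suppFinset_add_one (v : Fin ℓ → ZMod 2) : suppFinset (v + 1) = (suppFinset v)ᶜ := by
  ext j
  have hflip : ∀ a : ZMod 2, a + 1 ≠ 0 ↔ a = 0 := by decide
  simp [suppFinset, hflip]

theorem wt_add_one (v : Fin ℓ → ZMod 2) : wt (v + 1) = ℓ - wt v := by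
  simp [wt_eq_card_suppFinset, suppFinset_add_one, card_compl]

theorem card_filter_wt_eq (m : ℕ) : #{v : Fin ℓ → ZMod 2 | wt v = m} = ℓ.choose m := by
  have h (v : Fin ℓ → ZMod 2) :
      v ∈ ({v | wt v = m} : Finset _) ↔ suppEquiv ℓ v ∈ powersetCard m univ := by
    rw [mem_filter, mem_powersetCard_univ]
    simp [suppEquiv, wt_eq_card_suppFinset]
  rw [card_equiv _ h, card_powersetCard, card_univ, Fintype.card_fin]

theorem card_filter_wt_eq_and_cover_le (c : Fin ℓ → ZMod 2) (m : ℕ) :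
    #{v : Fin ℓ → ZMod 2 | wt v = m ∧ suppFinset c ⊆ suppFinset v} ≤
      (ℓ - wt c).choose (m - wt c) := by
  have h (v : Fin ℓ → ZMod 2) : v ∈ ({v | wt v = m ∧ suppFinset c ⊆ suppFinset v} : Finset _) ↔
      suppEquiv ℓ v ∈ ({s | #s = m ∧ suppFinset c ⊆ s} : Finset _) := by
    rw [mem_filter, mem_filter]
    simp [suppEquiv, wt_eq_card_suppFinset]
  rw [card_equiv _ h]
  simpa [wt_eq_card_suppFinset] using card_filter_card_eq_and_superset_le (suppFinset c) m

theorem card_filter_wt_eq_and_cover_le_sum (D : Finset (Fin ℓ → ZMod 2)) (m : ℕ) :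
    #{v : Fin ℓ → ZMod 2 | wt v = m ∧ ∃ c ∈ D, suppFinset c ⊆ suppFinset v} ≤
      ∑ j ∈ range (m + 1), (ℓ - j).choose (m - j) * #{c ∈ D | wt c = j} := by
  set D' := D.filter (wt · ≤ m)
  calc #{v : Fin ℓ → ZMod 2 | wt v = m ∧ ∃ c ∈ D, suppFinset c ⊆ suppFinset v}
      ≤ #(D'.biUnion fun c => {v : Fin ℓ → ZMod 2 | wt v = m ∧ suppFinset c ⊆ suppFinset v}) := by
        refine card_le_card fun v hv => ?_
        obtain ⟨hvm, c, hc, hcv⟩ := (mem_filter.1 hv).2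
        have hcm : wt c ≤ m := hvm ▸ card_le_card hcv
        exact mem_biUnion.2 ⟨c, mem_filter.2 ⟨hc, hcm⟩, mem_filter.2 ⟨mem_univ v, hvm, hcv⟩⟩
    _ ≤ ∑ c ∈ D', (ℓ - wt c).choose (m - wt c) :=
        card_biUnion_le.trans (sum_le_sum fun c _ => card_filter_wt_eq_and_cover_le c m)
    _ = ∑ j ∈ range (m + 1), ∑ c ∈ D' with wt c = j, (ℓ - j).choose (m - j) :=
        (sum_fiberwise_of_maps_to'
          (fun c hc => mem_range.2 (Nat.lt_succ_of_le (mem_filter.1 hc).2))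
          fun j => (ℓ - j).choose (m - j)).symm
    _ = ∑ j ∈ range (m + 1), (ℓ - j).choose (m - j) * #{c ∈ D | wt c = j} := by
        refine sum_congr rfl fun j hj => ?_
        have hfib : D'.filter (wt · = j) = D.filter (wt · = j) := by
          rw [filter_filter]
          exact filter_congr fun c _ =>
            ⟨And.right, fun h => ⟨h ▸ Nat.le_of_lt_succ (mem_range.1 hj), h⟩⟩
        rw [hfib, sum_const, smul_eq_mul, mul_comm]

end Weight

section Counting

open scoped Classical

variable {ℓ : ℕ}

theorem Ecount_add_card_correctable (K : Matrix (Fin ℓ) (Fin ℓ) (ZMod 2)) (i : Fin ℓ) (w : ℕ) :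
    Ecount K i w + #{e | ¬ Uncorrectable K i e ∧ wt e = w} = ℓ.choose w := by
  rw [Ecount, Nat.card_eq_fintype_card, Fintype.card_subtype, ← card_filter_wt_eq w,
    ← card_filter_add_card_filter_not (s := {v | wt v = w}) (Uncorrectable K i),
    filter_filter, filter_filter]
  simp only [and_comm]

theorem card_correctable_le_sum {K : Matrix (Fin ℓ) (Fin ℓ) (ZMod 2)} (hsd : SelfDual K)
    (i : Fin ℓ) (w : ℕ) :
    #{e | ¬ Uncorrectable K i e ∧ wt e = w} ≤
      ∑ j ∈ range (ℓ - w + 1), (ℓ - j).choose (ℓ - w - j) *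
        Nat.card {c : Fin ℓ → ZMod 2 //
          c ∈ kernelCode K i.rev ∧ c ∉ kernelCode K (ℓ - i) ∧ wt c = j} := by
  set D : Finset (Fin ℓ → ZMod 2) := {c | c ∈ kernelCode K i.rev ∧ c ∉ kernelCode K (ℓ - i)}
  calc #{e | ¬ Uncorrectable K i e ∧ wt e = w}
      ≤ #{v : Fin ℓ → ZMod 2 | wt v = ℓ - w ∧ ∃ c ∈ D, suppFinset c ⊆ suppFinset v} := by
        refine card_le_card_of_injOn (· + 1) (fun e he => ?_) (add_left_injective 1).injOn
        obtain ⟨hunc, hwe⟩ := (mem_filter.1 he).2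
        obtain ⟨c, hc, hc', hce⟩ := exists_mem_coset_vanishing_of_not_uncorrectable hsd hunc
        refine mem_filter.2 ⟨mem_univ _, by rw [wt_add_one, hwe], c,
          mem_filter.2 ⟨mem_univ c, hc, hc'⟩, ?_⟩
        intro j hj
        rw [suppFinset_add_one, mem_compl]
        exact fun hej => (mem_filter.1 hj).2 (hce j (mem_filter.1 hej).2)
    _ ≤ _ := card_filter_wt_eq_and_cover_le_sum D (ℓ - w)
    _ = _ := by
        simp only [D, filter_filter, and_assoc, Nat.card_eq_fintype_card, Fintype.card_subtype]

end Counting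

theorem Ecount_lower_bound_general {ℓ : ℕ}
    (K : Matrix (Fin ℓ) (Fin ℓ) (ZMod 2))
    (hsd : SelfDual K) (i : Fin ℓ) (A' : ℕ → ℕ)
    (hA' : ∀ j, A' j = Nat.card {c : Fin ℓ → ZMod 2 //
      c ∈ kernelCode K ((i.rev : ℕ)) ∧ c ∉ kernelCode K (ℓ - (i : ℕ)) ∧ wt c = j})
    (w : ℕ) (hw : w ≤ ℓ) :
    (ℓ.choose w : ℤ) -
        min (∑ j ∈ Finset.range (ℓ - w + 1), ((ℓ - j).choose (ℓ - w - j) : ℤ) * (A' j : ℤ))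
          (ℓ.choose (ℓ - w) : ℤ) ≤
      (Ecount K i w : ℤ) := by
  classical
  have hsplit := Ecount_add_card_correctable K i w
  have hcoset := card_correctable_le_sum hsd i w
  have hweight : #{e | ¬ Uncorrectable K i e ∧ wt e = w} ≤ ℓ.choose (ℓ - w) := by
    rw [Nat.choose_symm hw, ← card_filter_wt_eq w]
    exact card_le_card (monotone_filter_right _ fun _ _ => And.right)
  simp only [← hA'] at hcoset
  simp only [← Nat.cast_mul, ← Nat.cast_sum]
  omega

/-- Lower bound on `E_{i,w}` for a self-dual kernel, in terms of the weight enumerator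
of the coset `C_{ℓ-i} \ C_{ℓ+1-i}`. -/
theorem Ecount_lower_bound {ℓ : ℕ} (hℓ : 0 < ℓ)
    (K : Matrix (Fin ℓ) (Fin ℓ) (ZMod 2)) (hK : IsUnit K.det)
    (hsd : SelfDual K) (i : Fin ℓ) (A' : ℕ → ℕ)
    (hA' : ∀ j, A' j = Nat.card {c : Fin ℓ → ZMod 2 //
      c ∈ kernelCode K ((i.rev : ℕ)) ∧ c ∉ kernelCode K (ℓ - (i : ℕ)) ∧ wt c = j})
    (w : ℕ) (hw : w ≤ ℓ) :
    (ℓ.choose w : ℤ) -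
        min (∑ j ∈ Finset.range (ℓ - w + 1), ((ℓ - j).choose (ℓ - w - j) : ℤ) * (A' j : ℤ))
          (ℓ.choose (ℓ - w) : ℤ) ≤
      (Ecount K i w : ℤ) :=
  Ecount_lower_bound_general K hsd i A' hA' w hw
end

section
/- Let K be an invertible self-dual ℓ×ℓ matrix over F_2 and let g* : [0,1] → ℝ satisfy g*(x) = g*(1-x) for all x ∈ [0,1]. Define h(z) = (1/ℓ) ∑_{i=1}^ℓ g*(f_i(z)) for z ∈ [0,1]. Then h(z) = h(1-z) for all z ∈ [0,1]. -/
/-!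
Write `P_z(e) = z^wt(e) (1-z)^(ℓ-wt(e))` for the probability of the erasure pattern `e` on a
BEC of erasure probability `z`; grouping the patterns by weight gives
`f_i(z) = ∑_{e uncorrectable for i} P_z(e)`. Since `P_z(1 - e) = P_{1-z}(e)`, the theorem follows
from the duality: `e` is uncorrectable for channel `i` iff the complementary pattern `1 - e` is
correctable for channel `ℓ + 1 - i` (with 0-based indices, `i.rev`). Then
`f_i(z) + f_{ℓ+1-i}(1-z) = 1`, and `g*(f_i(1-z)) = g*(f_{ℓ+1-i}(z))` sums to the claim after
reindexing by `i ↦ ℓ + 1 - i`.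

For the duality, `e` is uncorrectable for `i` iff `g_i ∈ C_i + V(e)`, where `V(e)` is the space
of vectors supported in `supp e`. Self-duality gives `C_i^⊥ = C_{ℓ-i}` and
`(C_{i-1})^⊥ = C_{ℓ+1-i}`, whose difference is spanned by `g_{ℓ+1-i}`. A vector separating `g_i`
from `C_i + V(e)` lies in `C_{ℓ-i} ∩ V(1 - e)` and has a nonzero `g_{ℓ+1-i}`-coordinate, which
puts `g_{ℓ+1-i}` in `C_{ℓ+1-i} + V(1 - e)`; conversely both memberships together would force
`⟨g_{ℓ+1-i}, g_i⟩ = 0`, which fails because `g_{ℓ+1-i} ∉ C_{ℓ+1-i} = (C_{i-1})^⊥`.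
-/

open Finset Matrix

section

variable {ι : Type*}

def supportedIn {R : Type*} [Semiring R] (S : Set ι) : Submodule R (ι → R) :=
  Submodule.pi Sᶜ fun _ => ⊥

theorem mem_supportedIn {R : Type*} [Semiring R] {S : Set ι} {v : ι → R} :
    v ∈ supportedIn S ↔ ∀ j ∉ S, v j = 0 := by
  simp [supportedIn, Submodule.mem_pi]

theorem exists_dotProduct_eq_one_of_notMem {F : Type*} [Fintype ι] [Field F]
    {W : Submodule F (ι → F)} {g : ι → F} (hg : g ∉ W) :
    ∃ c : ι → F, (∀ w ∈ W, c ⬝ᵥ w = 0) ∧ c ⬝ᵥ g = 1 := by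
  classical
  obtain ⟨f, hfg, hfW⟩ := W.exists_dual_map_eq_bot_of_notMem hg inferInstance
  set c : ι → F := fun j => f fun k => if j = k then 1 else 0
  have hf : ∀ w, f w = c ⬝ᵥ w := fun w => by
    simp [LinearMap.pi_apply_eq_sum_univ f w, dotProduct, c, mul_comm]
  refine ⟨(f g)⁻¹ • c, fun w hw => ?_, ?_⟩
  · rw [smul_dotProduct, ← hf, (Submodule.eq_bot_iff _).1 hfW (f w) ⟨w, hw, rfl⟩, smul_zero]
  · rw [smul_dotProduct, ← hf, smul_eq_mul, inv_mul_cancel₀ hfg]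

end

section Codes

variable {ℓ : ℕ}

theorem mem_dualCode_iff {C : Submodule (ZMod 2) (Fin ℓ → ZMod 2)} {v : Fin ℓ → ZMod 2} :
    v ∈ dualCode C ↔ ∀ c ∈ C, v ⬝ᵥ c = 0 :=
  Iff.rfl

theorem dualCode_sup (C D : Submodule (ZMod 2) (Fin ℓ → ZMod 2)) :
    dualCode (C ⊔ D) = dualCode C ⊓ dualCode D := by
  ext v
  simp only [Submodule.mem_inf, mem_dualCode_iff]
  refine ⟨fun h => ⟨fun c hc => h c (Submodule.mem_sup_left hc),
    fun d hd => h d (Submodule.mem_sup_right hd)⟩, fun ⟨hC, hD⟩ x hx => ?_⟩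
  obtain ⟨c, hc, d, hd, rfl⟩ := Submodule.mem_sup.1 hx
  rw [dotProduct_add, hC c hc, hD d hd, add_zero]

theorem mem_dualCode_span_singleton {g v : Fin ℓ → ZMod 2} :
    v ∈ dualCode (Submodule.span (ZMod 2) {g}) ↔ v ⬝ᵥ g = 0 := by
  rw [mem_dualCode_iff]
  refine ⟨fun h => h g (Submodule.mem_span_singleton_self g), fun h x hx => ?_⟩
  obtain ⟨t, rfl⟩ := Submodule.mem_span_singleton.1 hx
  rw [dotProduct_smul, h, smul_zero]

theorem dualCode_supportedIn (S : Set (Fin ℓ)) :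
    dualCode (supportedIn S) = supportedIn Sᶜ := by
  ext v
  rw [mem_dualCode_iff, mem_supportedIn]
  constructor
  · intro h j hj
    have hsingle : Pi.single j 1 ∈ supportedIn (R := ZMod 2) S := mem_supportedIn.2 fun k hk =>
      Pi.single_eq_of_ne (by rintro rfl; exact hk (not_not.1 hj)) 1
    simpa using h _ hsingle
  · intro h c hc
    refine Finset.sum_eq_zero fun j _ => ?_
    by_cases hj : j ∈ S
    · rw [h j (not_not.2 hj), zero_mul]
    · rw [mem_supportedIn.1 hc j hj, mul_zero]

theorem mem_sup_supportedIn_compl_iff_notMem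
    {A B A' B' : Submodule (ZMod 2) (Fin ℓ → ZMod 2)} {g g' : Fin ℓ → ZMod 2}
    (hA' : A' = dualCode A) (hB' : B' = dualCode B)
    (hB : B = Submodule.span (ZMod 2) {g} ⊔ A) (hA'g : A' = Submodule.span (ZMod 2) {g'} ⊔ B')
    (hg' : g' ∉ B') (S : Set (Fin ℓ)) :
    g' ∈ B' ⊔ supportedIn Sᶜ ↔ g ∉ A ⊔ supportedIn S := by
  have hg'A' : g' ∈ A' := hA'g ▸ Submodule.mem_sup_left (Submodule.mem_span_singleton_self g')
  have hgB : g ∈ B := hB ▸ Submodule.mem_sup_left (Submodule.mem_span_singleton_self g)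
  have hpair : g' ⬝ᵥ g ≠ 0 := fun h => hg' <| by
    rw [hB', hB, dualCode_sup, Submodule.mem_inf, mem_dualCode_span_singleton, ← hA']
    exact ⟨h, hg'A'⟩
  constructor
  · rintro hg'mem hgmem
    obtain ⟨b', hb', s', hs', hg'sum⟩ := Submodule.mem_sup.1 hg'mem
    obtain ⟨a, ha, s, hs, hgsum⟩ := Submodule.mem_sup.1 hgmem
    have hs'A : s' ∈ dualCode A := by
      rw [← hA', show s' = g' - b' by rw [← hg'sum]; abel]
      exact sub_mem hg'A' (hA'g ▸ Submodule.mem_sup_right hb')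
    rw [← dualCode_supportedIn] at hs'
    rw [hB'] at hb'
    apply hpair
    rw [← hg'sum, add_dotProduct, mem_dualCode_iff.1 hb' g hgB, ← hgsum, dotProduct_add,
      mem_dualCode_iff.1 hs'A a ha, mem_dualCode_iff.1 hs' s hs, add_zero, zero_add]
  · intro hg
    obtain ⟨c, hc, hcg⟩ := exists_dotProduct_eq_one_of_notMem hg
    have hc : c ∈ dualCode (A ⊔ supportedIn S) := hc
    rw [dualCode_sup, dualCode_supportedIn, Submodule.mem_inf, ← hA', hA'g] at hc
    obtain ⟨hcA', hcS⟩ := hc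
    obtain ⟨x, hx, b', hb', rfl⟩ := Submodule.mem_sup.1 hcA'
    obtain ⟨t, rfl⟩ := Submodule.mem_span_singleton.1 hx
    have hb'g : b' ⬝ᵥ g = 0 := mem_dualCode_iff.1 (hB' ▸ hb') g hgB
    have ht : t ≠ 0 := by
      rintro rfl
      rw [zero_smul, zero_add, hb'g] at hcg
      exact zero_ne_one hcg
    have hg'eq : g' = t⁻¹ • (-b' + (t • g' + b')) := by
      rw [neg_add_cancel_comm_assoc, smul_smul, inv_mul_cancel₀ ht, one_smul]
    rw [hg'eq]
    exact Submodule.smul_mem _ _ (Submodule.add_mem_sup (neg_mem hb') hcS)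

namespace SelfDual

theorem kernelCode_sub {K : Matrix (Fin ℓ) (Fin ℓ) (ZMod 2)} (hsd : SelfDual K) {m : ℕ}
    (hm : m ≤ ℓ) : kernelCode K (ℓ - m) = dualCode (kernelCode K m) := by
  simpa [Nat.sub_sub_self hm] using hsd (ℓ - m) (Nat.sub_le ℓ m)

end SelfDual

section KernelCode

variable (K : Matrix (Fin ℓ) (Fin ℓ) (ZMod 2))

theorem kernelCode_eq_span_image (m : ℕ) :
    kernelCode K m = Submodule.span (ZMod 2) (K.row '' {r | m ≤ (r : ℕ)}) := by
  unfold kernelCode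
  congr 1
  ext v
  constructor <;> rintro ⟨r, hr, rfl⟩ <;> exact ⟨r, hr, rfl⟩

theorem kernelCode_eq_span_singleton_sup (r : Fin ℓ) :
    kernelCode K r = Submodule.span (ZMod 2) {K r} ⊔ kernelCode K (r + 1) := by
  have hset : {r' : Fin ℓ | (r : ℕ) ≤ r'} = insert r {r' : Fin ℓ | (r : ℕ) + 1 ≤ r'} := by
    ext r'
    simp only [Set.mem_ofPred_eq, Set.mem_insert_iff, Fin.ext_iff]
    omega
  rw [kernelCode_eq_span_image, kernelCode_eq_span_image, hset, Set.image_insert_eq,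
    Submodule.span_insert, row]

theorem kernelCode_eq_map (m : ℕ) :
    kernelCode K m = (supportedIn {j : Fin ℓ | m ≤ (j : ℕ)}).map K.vecMulLinear := by
  classical
  refine le_antisymm (Submodule.span_le.2 ?_) ?_
  · rintro _ ⟨r, hr, rfl⟩
    refine ⟨Pi.single r 1, mem_supportedIn.2 fun j hj => ?_, single_one_vecMul r K⟩
    exact Pi.single_eq_of_ne (by rintro rfl; exact hj hr) 1
  · rintro _ ⟨d, hd, rfl⟩
    rw [vecMulLinear_apply, vecMul_eq_sum]
    refine Submodule.sum_mem _ fun j _ => ?_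
    by_cases hj : m ≤ (j : ℕ)
    · exact Submodule.smul_mem _ _ (Submodule.subset_span ⟨j, hj, rfl⟩)
    · rw [mem_supportedIn.1 hd j hj, zero_smul]
      exact Submodule.zero_mem _

variable {K}

theorem row_notMem_kernelCode_succ (hK : IsUnit K.det) (r : Fin ℓ) :
    K r ∉ kernelCode K (r + 1) := by
  rw [kernelCode_eq_span_image]
  exact (linearIndependent_rows_iff_isUnit.2 ((isUnit_iff_isUnit_det K).2 hK)).notMem_span_image
    (by simp)

end KernelCode

theorem uncorrectable_iff_row_mem_sup (K : Matrix (Fin ℓ) (Fin ℓ) (ZMod 2)) (i : Fin ℓ)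
    (e : Fin ℓ → ZMod 2) :
    Uncorrectable K i e ↔ K i ∈ kernelCode K (i + 1) ⊔ supportedIn (supp e) := by
  classical
  rw [kernelCode_eq_map]
  constructor
  · rintro ⟨u', u'', hlt, hne, hoff⟩
    set d := (u' i - u'' i)⁻¹ • (u' - u'')
    have hdi : d i = 1 := inv_mul_cancel₀ (sub_ne_zero.2 hne)
    have hdlt : ∀ j < i, d j = 0 := fun j hj => by simp [d, hlt j hj]
    have hrow : K i = (Pi.single i 1 - d) ᵥ* K + d ᵥ* K := by
      rw [sub_vecMul, single_one_vecMul, sub_add_cancel, row]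
    rw [hrow]
    refine Submodule.add_mem_sup ⟨_, mem_supportedIn.2 fun j hj => ?_, rfl⟩
      (mem_supportedIn.2 fun j hj => ?_)
    · rcases lt_or_eq_of_le (Fin.le_def.2 (Nat.le_of_lt_succ (not_le.1 hj))) with hji | rfl
      · simp [Pi.single_eq_of_ne hji.ne, hdlt j hji]
      · simp [hdi]
    · have hej : e j = 0 := not_not.1 hj
      rw [smul_vecMul, sub_vecMul, Pi.smul_apply, Pi.sub_apply, hoff j hej, sub_self, smul_zero]
  · intro h
    obtain ⟨a, ha, s, hs, hsum⟩ := Submodule.mem_sup.1 h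
    obtain ⟨d, hd, rfl⟩ := Submodule.mem_map.1 ha
    have hdle : ∀ j ≤ i, d j = 0 := fun j hj => mem_supportedIn.1 hd j <| by
      simp only [Set.mem_ofPred_eq, not_le, Nat.lt_succ_iff]
      exact hj
    refine ⟨Pi.single i 1 - d, 0, fun j hj => ?_, ?_, fun j hj => ?_⟩
    · simp [Pi.single_eq_of_ne hj.ne, hdle j hj.le]
    · simp [hdle i le_rfl]
    · have hs' : (Pi.single i 1 - d) ᵥ* K = s := by
        rw [sub_vecMul, single_one_vecMul, row, ← hsum, vecMulLinear_apply, add_sub_cancel_left]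
      rw [hs', zero_vecMul, mem_supportedIn.1 hs j (by simpa [supp] using hj)]
      rfl

theorem supp_one_sub (e : Fin ℓ → ZMod 2) : supp (1 - e) = (supp e)ᶜ := by
  ext j
  simp only [supp, Set.mem_ofPred_eq, Set.mem_compl_iff, Pi.sub_apply, Pi.one_apply, not_not]
  generalize e j = a
  revert a
  decide

theorem uncorrectable_rev_one_sub_iff {K : Matrix (Fin ℓ) (Fin ℓ) (ZMod 2)} (hK : IsUnit K.det)
    (hsd : SelfDual K) (i : Fin ℓ) (e : Fin ℓ → ZMod 2) :
    Uncorrectable K i.rev (1 - e) ↔ ¬ Uncorrectable K i e := by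
  have hrev : (i.rev : ℕ) = ℓ - (i + 1) := Fin.val_rev i
  have hi := i.isLt
  rw [uncorrectable_iff_row_mem_sup, uncorrectable_iff_row_mem_sup, supp_one_sub]
  refine mem_sup_supportedIn_compl_iff_notMem ?_ ?_ (kernelCode_eq_span_singleton_sup K i)
    (kernelCode_eq_span_singleton_sup K i.rev) (row_notMem_kernelCode_succ hK i.rev) _
  · rw [hrev]
    exact hsd.kernelCode_sub (by omega)
  · rw [show (i.rev : ℕ) + 1 = ℓ - i by omega]
    exact hsd.kernelCode_sub i.isLt.le

theorem wt_le (e : Fin ℓ → ZMod 2) : wt e ≤ ℓ := by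
  simpa [wt] using card_filter_le univ fun j => e j ≠ 0

def erasureProb (z : ℝ) (e : Fin ℓ → ZMod 2) : ℝ :=
  ∏ j, if e j = 0 then 1 - z else z

theorem erasureProb_eq (z : ℝ) (e : Fin ℓ → ZMod 2) :
    erasureProb z e = z ^ wt e * (1 - z) ^ (ℓ - wt e) := by
  have hcard := card_filter_add_card_filter_not (s := univ) fun j => e j ≠ 0
  rw [card_univ, Fintype.card_fin] at hcard
  rw [erasureProb, prod_ite, prod_const, prod_const, wt, mul_comm]
  congr
  simp only [ne_eq, not_not] at hcard ⊢
  omega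

theorem sum_erasureProb (z : ℝ) : ∑ e : Fin ℓ → ZMod 2, erasureProb z e = 1 := by
  have hsum : ∑ a : ZMod 2, (if a = 0 then 1 - z else z) = 1 := by
    rw [sum_ite, filter_eq', filter_ne']
    simp
  simp only [erasureProb]
  rw [← Fintype.prod_sum fun _ a => if a = 0 then 1 - z else z, hsum, prod_const_one]

theorem erasureProb_one_sub (z : ℝ) (e : Fin ℓ → ZMod 2) :
    erasureProb z (1 - e) = erasureProb (1 - z) e := by
  have hflip : ∀ a : ZMod 2, 1 - a = 0 ↔ a ≠ 0 := by decide
  refine prod_congr rfl fun j _ => ?_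
  by_cases h : e j = 0 <;> simp [hflip, h]

theorem erasureProb_nonneg {z : ℝ} (hz : z ∈ Set.Icc (0 : ℝ) 1) (e : Fin ℓ → ZMod 2) :
    0 ≤ erasureProb z e :=
  prod_nonneg fun j _ => by split_ifs <;> linarith [hz.1, hz.2]

open Classical in
theorem fpoly_eq_sum_erasureProb (K : Matrix (Fin ℓ) (Fin ℓ) (ZMod 2)) (i : Fin ℓ) (z : ℝ) :
    fpoly K i z = ∑ e with Uncorrectable K i e, erasureProb z e := by
  simp_rw [erasureProb_eq]
  rw [← sum_fiberwise_of_maps_to' (t := range (ℓ + 1)) (g := wt)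
    (fun e _ => mem_range.2 (Nat.lt_succ_of_le (wt_le e))) fun w => z ^ w * (1 - z) ^ (ℓ - w)]
  refine sum_congr rfl fun w _ => ?_
  rw [sum_const, nsmul_eq_mul, Ecount, Nat.card_eq_fintype_card, Fintype.card_subtype,
    filter_filter, mul_assoc]

theorem fpoly_mem_Icc (K : Matrix (Fin ℓ) (Fin ℓ) (ZMod 2)) (i : Fin ℓ) {z : ℝ}
    (hz : z ∈ Set.Icc (0 : ℝ) 1) : fpoly K i z ∈ Set.Icc (0 : ℝ) 1 := by
  classical
  rw [fpoly_eq_sum_erasureProb]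
  exact ⟨sum_nonneg fun e _ => erasureProb_nonneg hz e,
    (sum_le_sum_of_subset_of_nonneg (filter_subset _ _) fun e _ _ => erasureProb_nonneg hz e).trans
      (sum_erasureProb z).le⟩

theorem fpoly_add_fpoly_rev_one_sub {K : Matrix (Fin ℓ) (Fin ℓ) (ZMod 2)} (hK : IsUnit K.det)
    (hsd : SelfDual K) (i : Fin ℓ) (z : ℝ) :
    fpoly K i z + fpoly K i.rev (1 - z) = 1 := by
  classical
  have hrev : ∑ e with Uncorrectable K i.rev e, erasureProb (1 - z) e =
      ∑ e with ¬ Uncorrectable K i e, erasureProb z e := by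
    rw [sum_filter, sum_filter, ← (Equiv.subLeft (1 : Fin ℓ → ZMod 2)).sum_comp]
    refine sum_congr rfl fun e _ => ?_
    simp only [Equiv.subLeft_apply, uncorrectable_rev_one_sub_iff hK hsd, erasureProb_one_sub,
      sub_sub_cancel]
  rw [fpoly_eq_sum_erasureProb, fpoly_eq_sum_erasureProb, hrev, sum_filter_add_sum_filter_not,
    sum_erasureProb]

end Codes

theorem test_function_symmetric_general {ℓ : ℕ}
    (K : Matrix (Fin ℓ) (Fin ℓ) (ZMod 2)) (hK : IsUnit K.det)
    (hsd : SelfDual K) (gstar : ℝ → ℝ)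
    (hgs : ∀ x ∈ Set.Icc (0 : ℝ) 1, gstar x = gstar (1 - x))
    (z : ℝ) (hz : z ∈ Set.Icc (0 : ℝ) 1) :
    (1 / ℓ : ℝ) * ∑ i : Fin ℓ, gstar (fpoly K i z) =
      (1 / ℓ : ℝ) * ∑ i : Fin ℓ, gstar (fpoly K i (1 - z)) := by
  congr 1
  calc ∑ i : Fin ℓ, gstar (fpoly K i z) = ∑ i : Fin ℓ, gstar (fpoly K i.rev z) :=
        (Equiv.sum_comp Fin.revPerm fun i => gstar (fpoly K i z)).symm
    _ = ∑ i : Fin ℓ, gstar (fpoly K i (1 - z)) := sum_congr rfl fun i _ => by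
        have hdual := fpoly_add_fpoly_rev_one_sub hK hsd i.rev z
        rw [Fin.rev_rev] at hdual
        rw [hgs _ (fpoly_mem_Icc K i.rev hz), ← eq_sub_of_add_eq' hdual]

/-- For a self-dual kernel and a test function `g*` symmetric about `1/2`,
the function `h(z) = (1/ℓ) ∑ᵢ g*(f_i(z))` satisfies `h(z) = h(1-z)` on `[0,1]`. -/
theorem test_function_symmetric {ℓ : ℕ} (hℓ : 0 < ℓ)
    (K : Matrix (Fin ℓ) (Fin ℓ) (ZMod 2)) (hK : IsUnit K.det)
    (hsd : SelfDual K) (gstar : ℝ → ℝ)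
    (hgs : ∀ x ∈ Set.Icc (0 : ℝ) 1, gstar x = gstar (1 - x))
    (z : ℝ) (hz : z ∈ Set.Icc (0 : ℝ) 1) :
    (1 / ℓ : ℝ) * ∑ i : Fin ℓ, gstar (fpoly K i z) =
      (1 / ℓ : ℝ) * ∑ i : Fin ℓ, gstar (fpoly K i (1 - z)) :=
  test_function_symmetric_general K hK hsd gstar hgs z hz
end
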